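/- Let $a<b$, $T>0$, $\mu\in\mathbb{R}$, and suppose $(u_1,\theta_1)$ and $(u_2,\theta_2)$ are two classical solutions ($u_i\in C^3([0,T]\times[a,b])$, $\theta_i\in C^{1,2}([0,T]\times[a,b])$) of the system $u_{tt}-u_{xx}=\mu\theta_x$, $\theta_t-\theta_{xx}=\mu\theta u_{tx}$ with boundary conditions $u(\cdot,a)=u(\cdot,b)=0$, $\theta_x(\cdot,a)=\theta_x(\cdot,b)=0$, sharing the same initial data $u_1(0,\cdot)=u_2(0,\cdot)$, $\partial_t u_1(0,\cdot)=\partial_t u_2(0,\cdot)$, $\theta_1(0,\cdot)=\theta_2(0,\cdot)$. Then $u_1=u_2$ and $\theta_1=\theta_2$ on $[0,T]\times[a,b]$. -/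

import Mathlib

/-!
Energy method. The differences `v = u₁ - u₂`, `w = θ₁ - θ₂` solve a linear system whose
coefficients `∂ₜ∂ₓu₁`, `θ₂`, `∂ₓθ₂` are continuous, hence bounded, on the compact rectangle.
Integrating by parts against the boundary conditions `v = 0`, `∂ₓw = 0` removes every second
derivative from the time derivative of `E = ∫ (vₜ² + vₓ² + w²)`; Young's inequality bounds the rest,
so `E' ≤ C E`. Since `E(0) = 0`, Grönwall gives `E ≡ 0`, so `vₜ = w = 0`, and `v = 0` follows
from `v(0) = 0`.
-/

open Set Function MeasureTheory intervalIntegral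

/-- A classical solution of the 1d minimal thermoelasticity system on
`[0,T] × [a,b]`, with the named functions being the relevant partial
derivatives of `u` and `θ`. -/
def IsThermoSolution (a b T μ : ℝ)
    (u ut utt ux uxx utx θ θt θx θxx : ℝ → ℝ → ℝ) : Prop :=
  (∀ t ∈ Icc 0 T, ∀ x ∈ Icc a b,
      HasDerivWithinAt (fun s => u s x) (ut t x) (Icc 0 T) t)
  ∧ (∀ t ∈ Icc 0 T, ∀ x ∈ Icc a b,
      HasDerivWithinAt (fun s => ut s x) (utt t x) (Icc 0 T) t)
  ∧ (∀ t ∈ Icc 0 T, ∀ x ∈ Icc a b,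
      HasDerivWithinAt (u t) (ux t x) (Icc a b) x)
  ∧ (∀ t ∈ Icc 0 T, ∀ x ∈ Icc a b,
      HasDerivWithinAt (ux t) (uxx t x) (Icc a b) x)
  ∧ (∀ t ∈ Icc 0 T, ∀ x ∈ Icc a b,
      HasDerivWithinAt (ut t) (utx t x) (Icc a b) x)
  ∧ (∀ t ∈ Icc 0 T, ∀ x ∈ Icc a b,
      HasDerivWithinAt (fun s => θ s x) (θt t x) (Icc 0 T) t)
  ∧ (∀ t ∈ Icc 0 T, ∀ x ∈ Icc a b,
      HasDerivWithinAt (θ t) (θx t x) (Icc a b) x)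
  ∧ (∀ t ∈ Icc 0 T, ∀ x ∈ Icc a b,
      HasDerivWithinAt (θx t) (θxx t x) (Icc a b) x)
  ∧ ContinuousOn (fun p : ℝ × ℝ =>
      (utt p.1 p.2, uxx p.1 p.2, utx p.1 p.2, θt p.1 p.2, θxx p.1 p.2, θx p.1 p.2,
        ut p.1 p.2, ux p.1 p.2, θ p.1 p.2)) (Icc 0 T ×ˢ Icc a b)
  ∧ (∀ t ∈ Ioo 0 T, ∀ x ∈ Ioo a b, utt t x - uxx t x = μ * θx t x)
  ∧ (∀ t ∈ Ioo 0 T, ∀ x ∈ Ioo a b, θt t x - θxx t x = μ * θ t x * utx t x)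
  ∧ (∀ t ∈ Icc 0 T, u t a = 0 ∧ u t b = 0 ∧ θx t a = 0 ∧ θx t b = 0)


section Calculus

variable {a b c d : ℝ}

theorem integral_eq_sub_of_hasDerivWithinAt_Icc {f f' : ℝ → ℝ}
    (hf : ∀ t ∈ Icc c d, HasDerivWithinAt f (f' t) (Icc c d) t) (hf' : ContinuousOn f' (Icc c d))
    {t : ℝ} (ht : t ∈ Icc c d) : ∫ s in c..t, f' s = f t - f c := by
  have hsub : Icc c t ⊆ Icc c d := Icc_subset_Icc_right ht.2
  refine integral_eq_sub_of_hasDerivAt_of_le ht.1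
    (fun s hs => (hf s (hsub hs)).continuousWithinAt.mono hsub) (fun s hs => ?_)
    ((hf'.mono hsub).intervalIntegrable_of_Icc ht.1)
  exact (hf s (hsub (Ioo_subset_Icc_self hs))).hasDerivAt
    (Icc_mem_nhds hs.1 (hs.2.trans_le ht.2))

theorem integral_congr_Icc {f g : ℝ → ℝ} {t : ℝ} (ht : t ∈ Icc c d)
    (h : ∀ s ∈ Icc c d, f s = g s) : ∫ s in c..t, f s = ∫ s in c..t, g s :=
  integral_congr fun s hs => by
    rw [uIcc_of_le ht.1] at hs
    exact h s (Icc_subset_Icc_right ht.2 hs)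

theorem hasDerivWithinAt_integral_Icc {G : ℝ → ℝ} (hG : ContinuousOn G (Icc c d)) {t : ℝ}
    (ht : t ∈ Icc c d) : HasDerivWithinAt (fun s => ∫ r in c..s, G r) (G t) (Icc c d) t := by
  have hcd : c ≤ d := ht.1.trans ht.2
  set G' := fun s => G (projIcc c d hcd s)
  have hG' : Continuous G' :=
    hG.comp_continuous (continuous_subtype_val.comp continuous_projIcc) fun s => Subtype.prop _
  have hGG' : ∀ s ∈ Icc c d, G' s = G s := fun s hs => by simp [G', projIcc_of_mem hcd hs]
  refine ((hG'.integral_hasStrictDerivAt c t).hasDerivAt.hasDerivWithinAt.congr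
    (fun s hs => integral_congr_Icc hs fun r hr => (hGG' r hr).symm)
    (integral_congr_Icc ht fun r hr => (hGG' r hr).symm)).congr_deriv (hGG' t ht)

theorem continuousOn_intervalIntegral_of_continuousOn_prod {g : ℝ → ℝ → ℝ} (hab : a ≤ b)
    (hg : ContinuousOn (uncurry g) (Icc c d ×ˢ Icc a b)) :
    ContinuousOn (fun s => ∫ x in a..b, g s x) (Icc c d) := by
  intro s hs
  have hcd : c ≤ d := hs.1.trans hs.2
  set g' := fun s x => g (projIcc c d hcd s) (projIcc a b hab x)
  have hg' : Continuous (uncurry g') :=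
    hg.comp_continuous
      (f := fun p : ℝ × ℝ => ((projIcc c d hcd p.1 : ℝ), (projIcc a b hab p.2 : ℝ)))
      (by fun_prop) fun p => ⟨Subtype.prop _, Subtype.prop _⟩
  have hgg' : ∀ s ∈ Icc c d, ∫ x in a..b, g' s x = ∫ x in a..b, g s x := fun s hs =>
    integral_congr_Icc (right_mem_Icc.2 hab) fun x hx => by
      simp [g', projIcc_of_mem hcd hs, projIcc_of_mem hab hx]
  exact ((continuous_parametric_intervalIntegral_of_continuous' hg' a b).continuousWithinAt).congr
    (fun r hr => (hgg' r hr).symm) (hgg' s hs).symm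

theorem intervalIntegral_swap_of_continuousOn {H : ℝ → ℝ → ℝ} (hcd : c ≤ d) (hab : a ≤ b)
    (hH : ContinuousOn (uncurry H) (Icc c d ×ˢ Icc a b)) :
    ∫ s in c..d, ∫ x in a..b, H s x = ∫ x in a..b, ∫ s in c..d, H s x := by
  refine intervalIntegral_intervalIntegral_swap
    ((hH.integrableOn_compact (isCompact_Icc.prod isCompact_Icc)).mono_set ?_)
  rw [uIoc_of_le hcd, uIoc_of_le hab]
  exact prod_mono Ioc_subset_Icc_self Ioc_subset_Icc_self

theorem ContinuousOn.uncurry_swap {g : ℝ → ℝ → ℝ} {s t : Set ℝ}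
    (hg : ContinuousOn (uncurry g) (s ×ˢ t)) : ContinuousOn (uncurry fun x r => g r x) (t ×ˢ s) :=
  hg.comp continuous_swap.continuousOn (mapsTo_swap_prod t s)

theorem hasDerivWithinAt_intervalIntegral_of_continuousOn {e g : ℝ → ℝ → ℝ} (hab : a ≤ b)
    (he : ∀ t ∈ Icc c d, ∀ x ∈ Icc a b, HasDerivWithinAt (fun s => e s x) (g t x) (Icc c d) t)
    (he₀ : IntervalIntegrable (e c) volume a b)
    (hg : ContinuousOn (uncurry g) (Icc c d ×ˢ Icc a b)) {t : ℝ} (ht : t ∈ Icc c d) :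
    HasDerivWithinAt (fun s => ∫ x in a..b, e s x) (∫ x in a..b, g t x) (Icc c d) t := by
  have hrep : ∀ s ∈ Icc c d,
      ∫ x in a..b, e s x = (∫ x in a..b, e c x) + ∫ r in c..s, ∫ x in a..b, g r x := by
    intro s hs
    have hgs : ContinuousOn (uncurry g) (Icc c s ×ˢ Icc a b) :=
      hg.mono (prod_mono (Icc_subset_Icc_right hs.2) subset_rfl)
    rw [intervalIntegral_swap_of_continuousOn hs.1 hab hgs]
    refine (integral_congr_Icc (right_mem_Icc.2 hab) fun x hx => ?_).trans (integral_add he₀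
      ((continuousOn_intervalIntegral_of_continuousOn_prod hs.1
        hgs.uncurry_swap).intervalIntegrable_of_Icc hab))
    rw [integral_eq_sub_of_hasDerivWithinAt_Icc (fun r hr => he r hr x hx)
      (hg.uncurry_right x hx) hs]
    ring
  exact ((hasDerivWithinAt_integral_Icc
    (continuousOn_intervalIntegral_of_continuousOn_prod hab hg) ht).const_add
      (∫ x in a..b, e c x)).congr hrep (hrep t ht)

theorem hasDerivWithinAt_mixed_partial {f ft fx ftx : ℝ → ℝ → ℝ} (hab : a < b)
    (hft : ∀ t ∈ Icc c d, ∀ x ∈ Icc a b, HasDerivWithinAt (fun s => f s x) (ft t x) (Icc c d) t)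
    (hfx : ∀ t ∈ Icc c d, ∀ x ∈ Icc a b, HasDerivWithinAt (f t) (fx t x) (Icc a b) x)
    (hftx : ∀ t ∈ Icc c d, ∀ x ∈ Icc a b, HasDerivWithinAt (ft t) (ftx t x) (Icc a b) x)
    (hft_cont : ContinuousOn (uncurry ft) (Icc c d ×ˢ Icc a b))
    (hftx_cont : ContinuousOn (uncurry ftx) (Icc c d ×ˢ Icc a b))
    {t x : ℝ} (ht : t ∈ Icc c d) (hx : x ∈ Icc a b) :
    HasDerivWithinAt (fun s => fx s x) (ftx t x) (Icc c d) t := by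
  -- Both sides are `x`-derivatives of `f s - f c = ∫ r in c..s, ft r ·`.
  have hrep : ∀ s ∈ Icc c d, fx s x = fx c x + ∫ r in c..s, ftx r x := by
    intro s hs
    have hsub : Icc c s ⊆ Icc c d := Icc_subset_Icc_right hs.2
    have hc : c ∈ Icc c d := left_mem_Icc.2 (hs.1.trans hs.2)
    have hdiff : HasDerivWithinAt (fun z => ∫ r in c..s, ft r z) (fx s x - fx c x) (Icc a b) x :=
      ((hfx s hs x hx).sub (hfx c hc x hx)).congr
        (fun z hz => integral_eq_sub_of_hasDerivWithinAt_Icc (fun r hr => hft r hr z hz)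
          (hft_cont.uncurry_right z hz) hs)
        (integral_eq_sub_of_hasDerivWithinAt_Icc (fun r hr => hft r hr x hx)
          (hft_cont.uncurry_right x hx) hs)
    have hint : HasDerivWithinAt (fun z => ∫ r in c..s, ft r z) (∫ r in c..s, ftx r x)
        (Icc a b) x :=
      hasDerivWithinAt_intervalIntegral_of_continuousOn (e := fun z r => ft r z) hs.1
        (fun z hz r hr => hftx r (hsub hr) z hz)
        (((hft_cont.uncurry_right a (left_mem_Icc.2 hab.le)).mono hsub).intervalIntegrable_of_Icc
          hs.1)
        ((hftx_cont.mono (prod_mono hsub subset_rfl)).uncurry_swap) hx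
    linarith [(uniqueDiffOn_Icc hab x hx).eq_deriv _ hdiff hint]
  exact ((hasDerivWithinAt_integral_Icc (hftx_cont.uncurry_right x hx) ht).const_add
    (fx c x)).congr hrep (hrep t ht)

theorem eq_zero_of_hasDerivWithinAt_of_forall_eq_zero {f : ℝ → ℝ} {f' t : ℝ} (hcd : c < d)
    (hf : ∀ s ∈ Icc c d, f s = 0) (ht : t ∈ Icc c d) (hd : HasDerivWithinAt f f' (Icc c d) t) :
    f' = 0 :=
  (uniqueDiffOn_Icc hcd t ht).eq_deriv _ hd ((hasDerivWithinAt_const t _ 0).congr hf (hf t ht))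

theorem eq_zero_of_intervalIntegral_eq_zero_of_nonneg {f : ℝ → ℝ} (hab : a < b)
    (hf : ContinuousOn f (Icc a b)) (hf₀ : ∀ x ∈ Icc a b, 0 ≤ f x)
    (hint : ∫ x in a..b, f x = 0) : ∀ x ∈ Icc a b, f x = 0 := by
  by_contra! ⟨x, hx, hfx⟩
  have := integral_lt_integral_of_continuousOn_of_le_of_exists_lt hab continuousOn_const hf
    (fun y hy => hf₀ y (Ioc_subset_Icc_self hy)) ⟨x, hx, (hf₀ x hx).lt_of_ne' hfx⟩
  simp [hint] at this

theorem le_zero_of_hasDerivWithinAt_le_mul {f f' : ℝ → ℝ} {C : ℝ}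
    (hf : ∀ t ∈ Icc c d, HasDerivWithinAt f (f' t) (Icc c d) t)
    (hle : ∀ t ∈ Icc c d, f' t ≤ C * f t) (hc : f c ≤ 0) : ∀ t ∈ Icc c d, f t ≤ 0 := by
  intro t ht
  have := le_gronwallBound_of_liminf_deriv_right_le (f' := f') (ε := 0)
    (fun s hs => (hf s hs).continuousWithinAt) (fun s hs r hr =>
      ((hf s (Ico_subset_Icc_self hs)).mono_of_mem_nhdsWithin
        (Icc_mem_nhdsGE_of_mem hs)).liminf_right_slope_le hr) hc
    (fun s hs => by simpa using hle s (Ico_subset_Icc_self hs)) t ht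
  rwa [gronwallBound_ε0_δ0] at this

theorem forall_Icc_prod_of_forall_Ioo_prod {f g : ℝ → ℝ → ℝ} (hcd : c < d) (hab : a < b)
    (hf : ContinuousOn (uncurry f) (Icc c d ×ˢ Icc a b))
    (hg : ContinuousOn (uncurry g) (Icc c d ×ˢ Icc a b))
    (h : ∀ t ∈ Ioo c d, ∀ x ∈ Ioo a b, f t x = g t x) :
    ∀ t ∈ Icc c d, ∀ x ∈ Icc a b, f t x = g t x := fun t ht x hx =>
  EqOn.of_subset_closure (s := Ioo c d ×ˢ Ioo a b) (fun p hp => h p.1 hp.1 p.2 hp.2) hf hg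
    (prod_mono Ioo_subset_Icc_self Ioo_subset_Icc_self)
    (by rw [closure_prod_eq, closure_Ioo hcd.ne, closure_Ioo hab.ne]) (mk_mem_prod ht hx)

end Calculus

theorem energy_rate_remainder_le {μ M A X W Wx p q qx : ℝ} (hp : |p| ≤ M) (hq : |q| ≤ M)
    (hqx : |qx| ≤ M) :
    2 * μ * A * Wx - 2 * Wx ^ 2 + 2 * μ * p * W ^ 2 - 2 * μ * qx * W * A - 2 * μ * q * Wx * A
      ≤ (μ ^ 2 * (1 + M ^ 2) + 3 * |μ| * M) * (A ^ 2 + X ^ 2 + W ^ 2) := by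
  have hM : 0 ≤ M := (abs_nonneg p).trans hp
  have hμp : μ * p ≤ |μ| * M := (le_abs_self _).trans (by rw [abs_mul]; gcongr)
  have hμqx : |μ * qx| ≤ |μ| * M := by rw [abs_mul]; gcongr
  have hq2 : q ^ 2 ≤ M ^ 2 := sq_le_sq' (abs_le.1 hq).1 (abs_le.1 hq).2
  have hWA : -(2 * (μ * qx) * W * A) ≤ |μ| * M * (W ^ 2 + A ^ 2) := by
    nlinarith [neg_abs_le (μ * qx), le_abs_self (μ * qx), sq_nonneg (W - A), sq_nonneg (W + A)]
  have hμM : 0 ≤ |μ| * M := mul_nonneg (abs_nonneg μ) hM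
  linarith [sq_nonneg (Wx - μ * A), sq_nonneg (Wx + μ * q * A), mul_le_mul_of_nonneg_left hq2
    (sq_nonneg (μ * A)), mul_le_mul_of_nonneg_right hμp (sq_nonneg W), mul_nonneg hμM (sq_nonneg A),
    mul_nonneg hμM (sq_nonneg X), sq_nonneg (μ * X), sq_nonneg (μ * M * X), sq_nonneg (μ * W),
    sq_nonneg (μ * M * W)]

theorem integral_energy_rate_le {a b μ M : ℝ} {A Ax X Xx W Wx Wxx p q qx : ℝ → ℝ} (hab : a ≤ b)
    (hA : ∀ x ∈ Icc a b, HasDerivWithinAt A (Ax x) (Icc a b) x)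
    (hX : ∀ x ∈ Icc a b, HasDerivWithinAt X (Xx x) (Icc a b) x)
    (hW : ∀ x ∈ Icc a b, HasDerivWithinAt W (Wx x) (Icc a b) x)
    (hWx : ∀ x ∈ Icc a b, HasDerivWithinAt Wx (Wxx x) (Icc a b) x)
    (hq : ∀ x ∈ Icc a b, HasDerivWithinAt q (qx x) (Icc a b) x)
    (hAx : ContinuousOn Ax (Icc a b)) (hXx : ContinuousOn Xx (Icc a b))
    (hWxx : ContinuousOn Wxx (Icc a b)) (hp : ContinuousOn p (Icc a b))
    (hqx : ContinuousOn qx (Icc a b)) (hM : ∀ x ∈ Icc a b, |p x| ≤ M ∧ |q x| ≤ M ∧ |qx x| ≤ M)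
    (hAa : A a = 0) (hAb : A b = 0) (hWxa : Wx a = 0) (hWxb : Wx b = 0) :
    ∫ x in a..b, (2 * A x * (Xx x + μ * Wx x) + 2 * X x * Ax x
        + 2 * W x * (Wxx x + μ * (p x * W x + q x * Ax x)))
      ≤ (μ ^ 2 * (1 + M ^ 2) + 3 * |μ| * M) * ∫ x in a..b, (A x ^ 2 + X x ^ 2 + W x ^ 2) := by
  have cA : ContinuousOn A (Icc a b) := fun x hx => (hA x hx).continuousWithinAt
  have cX : ContinuousOn X (Icc a b) := fun x hx => (hX x hx).continuousWithinAt
  have cW : ContinuousOn W (Icc a b) := fun x hx => (hW x hx).continuousWithinAt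
  have cWx : ContinuousOn Wx (Icc a b) := fun x hx => (hWx x hx).continuousWithinAt
  have cq : ContinuousOn q (Icc a b) := fun x hx => (hq x hx).continuousWithinAt
  -- `B'` is the derivative of the flux `B = 2 A X + 2 W Wx + 2 μ q W A`, which vanishes at `a`
  -- and `b`; subtracting it removes every second derivative from the integrand.
  set B' : ℝ → ℝ := fun x => 2 * (Ax x * X x + A x * Xx x) + 2 * (Wx x * Wx x + W x * Wxx x)
    + 2 * μ * (qx x * (W x * A x) + q x * (Wx x * A x + W x * Ax x))
  have hB : ∀ x ∈ Icc a b, HasDerivWithinAt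
      (fun x => 2 * (A x * X x) + 2 * (W x * Wx x) + 2 * μ * (q x * (W x * A x))) (B' x)
      (Icc a b) x := fun x hx =>
    ((((hA x hx).mul (hX x hx)).const_mul 2).add (((hW x hx).mul (hWx x hx)).const_mul 2)).add
      (((hq x hx).mul ((hW x hx).mul (hA x hx))).const_mul (2 * μ))
  have cB' : ContinuousOn B' (Icc a b) := by fun_prop
  have hB0 : ∫ x in a..b, B' x = 0 := by
    rw [integral_eq_sub_of_hasDerivWithinAt_Icc hB cB' (right_mem_Icc.2 hab)]
    simp [hAa, hAb, hWxa, hWxb]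
  have ig : IntervalIntegrable (fun x => 2 * A x * (Xx x + μ * Wx x) + 2 * X x * Ax x
      + 2 * W x * (Wxx x + μ * (p x * W x + q x * Ax x))) volume a b :=
    ContinuousOn.intervalIntegrable_of_Icc hab (by fun_prop)
  have ie : IntervalIntegrable (fun x => A x ^ 2 + X x ^ 2 + W x ^ 2) volume a b :=
    ContinuousOn.intervalIntegrable_of_Icc hab (by fun_prop)
  rw [← sub_zero (∫ x in a..b, _), ← hB0, ← integral_sub ig (cB'.intervalIntegrable_of_Icc hab),
    ← intervalIntegral.integral_const_mul]
  refine integral_mono_on hab (ig.sub (cB'.intervalIntegrable_of_Icc hab)) (ie.const_mul _)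
    fun x hx => ?_
  obtain ⟨hp_le, hq_le, hqx_le⟩ := hM x hx
  linarith [energy_rate_remainder_le (μ := μ) (A := A x) (X := X x) (W := W x) (Wx := Wx x)
    hp_le hq_le hqx_le]

section Thermoelasticity

variable {a b T μ : ℝ}

structure IsThermoRegular (a b T : ℝ) (u ut utt ux uxx utx θ θt θx θxx : ℝ → ℝ → ℝ) : Prop where
  hasDerivWithinAt_u_t : ∀ t ∈ Icc 0 T, ∀ x ∈ Icc a b,
    HasDerivWithinAt (fun s => u s x) (ut t x) (Icc 0 T) t
  hasDerivWithinAt_ut_t : ∀ t ∈ Icc 0 T, ∀ x ∈ Icc a b,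
    HasDerivWithinAt (fun s => ut s x) (utt t x) (Icc 0 T) t
  hasDerivWithinAt_u_x : ∀ t ∈ Icc 0 T, ∀ x ∈ Icc a b, HasDerivWithinAt (u t) (ux t x) (Icc a b) x
  hasDerivWithinAt_ux_x : ∀ t ∈ Icc 0 T, ∀ x ∈ Icc a b,
    HasDerivWithinAt (ux t) (uxx t x) (Icc a b) x
  hasDerivWithinAt_ut_x : ∀ t ∈ Icc 0 T, ∀ x ∈ Icc a b,
    HasDerivWithinAt (ut t) (utx t x) (Icc a b) x
  hasDerivWithinAt_θ_t : ∀ t ∈ Icc 0 T, ∀ x ∈ Icc a b,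
    HasDerivWithinAt (fun s => θ s x) (θt t x) (Icc 0 T) t
  hasDerivWithinAt_θ_x : ∀ t ∈ Icc 0 T, ∀ x ∈ Icc a b, HasDerivWithinAt (θ t) (θx t x) (Icc a b) x
  hasDerivWithinAt_θx_x : ∀ t ∈ Icc 0 T, ∀ x ∈ Icc a b,
    HasDerivWithinAt (θx t) (θxx t x) (Icc a b) x
  continuousOn_utt : ContinuousOn (uncurry utt) (Icc 0 T ×ˢ Icc a b)
  continuousOn_uxx : ContinuousOn (uncurry uxx) (Icc 0 T ×ˢ Icc a b)
  continuousOn_utx : ContinuousOn (uncurry utx) (Icc 0 T ×ˢ Icc a b)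
  continuousOn_θt : ContinuousOn (uncurry θt) (Icc 0 T ×ˢ Icc a b)
  continuousOn_θxx : ContinuousOn (uncurry θxx) (Icc 0 T ×ˢ Icc a b)
  continuousOn_θx : ContinuousOn (uncurry θx) (Icc 0 T ×ˢ Icc a b)
  continuousOn_ut : ContinuousOn (uncurry ut) (Icc 0 T ×ˢ Icc a b)
  continuousOn_ux : ContinuousOn (uncurry ux) (Icc 0 T ×ˢ Icc a b)
  continuousOn_θ : ContinuousOn (uncurry θ) (Icc 0 T ×ˢ Icc a b)

theorem IsThermoSolution.isThermoRegular {u ut utt ux uxx utx θ θt θx θxx : ℝ → ℝ → ℝ}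
    (h : IsThermoSolution a b T μ u ut utt ux uxx utx θ θt θx θxx) :
    IsThermoRegular a b T u ut utt ux uxx utx θ θt θx θxx :=
  let ⟨hut, hutt, hux, huxx, hutx, hθt, hθx, hθxx, hc, _⟩ := h
  ⟨hut, hutt, hux, huxx, hutx, hθt, hθx, hθxx, hc.fst, hc.snd.fst, hc.snd.snd.fst,
    hc.snd.snd.snd.fst, hc.snd.snd.snd.snd.fst, hc.snd.snd.snd.snd.snd.fst,
    hc.snd.snd.snd.snd.snd.snd.fst, hc.snd.snd.snd.snd.snd.snd.snd.fst,
    hc.snd.snd.snd.snd.snd.snd.snd.snd⟩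

theorem IsThermoRegular.sub
    {u₁ u₁t u₁tt u₁x u₁xx u₁tx θ₁ θ₁t θ₁x θ₁xx u₂ u₂t u₂tt u₂x u₂xx u₂tx θ₂ θ₂t θ₂x θ₂xx :
      ℝ → ℝ → ℝ}
    (h₁ : IsThermoRegular a b T u₁ u₁t u₁tt u₁x u₁xx u₁tx θ₁ θ₁t θ₁x θ₁xx)
    (h₂ : IsThermoRegular a b T u₂ u₂t u₂tt u₂x u₂xx u₂tx θ₂ θ₂t θ₂x θ₂xx) :
    IsThermoRegular a b T (u₁ - u₂) (u₁t - u₂t) (u₁tt - u₂tt) (u₁x - u₂x) (u₁xx - u₂xx)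
      (u₁tx - u₂tx) (θ₁ - θ₂) (θ₁t - θ₂t) (θ₁x - θ₂x) (θ₁xx - θ₂xx) where
  hasDerivWithinAt_u_t t ht x hx :=
    (h₁.hasDerivWithinAt_u_t t ht x hx).sub (h₂.hasDerivWithinAt_u_t t ht x hx)
  hasDerivWithinAt_ut_t t ht x hx :=
    (h₁.hasDerivWithinAt_ut_t t ht x hx).sub (h₂.hasDerivWithinAt_ut_t t ht x hx)
  hasDerivWithinAt_u_x t ht x hx :=
    (h₁.hasDerivWithinAt_u_x t ht x hx).sub (h₂.hasDerivWithinAt_u_x t ht x hx)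
  hasDerivWithinAt_ux_x t ht x hx :=
    (h₁.hasDerivWithinAt_ux_x t ht x hx).sub (h₂.hasDerivWithinAt_ux_x t ht x hx)
  hasDerivWithinAt_ut_x t ht x hx :=
    (h₁.hasDerivWithinAt_ut_x t ht x hx).sub (h₂.hasDerivWithinAt_ut_x t ht x hx)
  hasDerivWithinAt_θ_t t ht x hx :=
    (h₁.hasDerivWithinAt_θ_t t ht x hx).sub (h₂.hasDerivWithinAt_θ_t t ht x hx)
  hasDerivWithinAt_θ_x t ht x hx :=
    (h₁.hasDerivWithinAt_θ_x t ht x hx).sub (h₂.hasDerivWithinAt_θ_x t ht x hx)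
  hasDerivWithinAt_θx_x t ht x hx :=
    (h₁.hasDerivWithinAt_θx_x t ht x hx).sub (h₂.hasDerivWithinAt_θx_x t ht x hx)
  continuousOn_utt := h₁.continuousOn_utt.sub h₂.continuousOn_utt
  continuousOn_uxx := h₁.continuousOn_uxx.sub h₂.continuousOn_uxx
  continuousOn_utx := h₁.continuousOn_utx.sub h₂.continuousOn_utx
  continuousOn_θt := h₁.continuousOn_θt.sub h₂.continuousOn_θt
  continuousOn_θxx := h₁.continuousOn_θxx.sub h₂.continuousOn_θxx
  continuousOn_θx := h₁.continuousOn_θx.sub h₂.continuousOn_θx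
  continuousOn_ut := h₁.continuousOn_ut.sub h₂.continuousOn_ut
  continuousOn_ux := h₁.continuousOn_ux.sub h₂.continuousOn_ux
  continuousOn_θ := h₁.continuousOn_θ.sub h₂.continuousOn_θ

noncomputable def thermoEnergy (a b : ℝ) (ut ux θ : ℝ → ℝ → ℝ) (t : ℝ) : ℝ :=
  ∫ x in a..b, (ut t x ^ 2 + ux t x ^ 2 + θ t x ^ 2)

variable {u ut utt ux uxx utx θ θt θx θxx : ℝ → ℝ → ℝ}

theorem IsThermoRegular.hasDerivWithinAt_thermoEnergy (hab : a < b)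
    (h : IsThermoRegular a b T u ut utt ux uxx utx θ θt θx θxx) {t : ℝ} (ht : t ∈ Icc 0 T) :
    HasDerivWithinAt (thermoEnergy a b ut ux θ)
      (∫ x in a..b, (2 * ut t x * utt t x + 2 * ux t x * utx t x + 2 * θ t x * θt t x))
      (Icc 0 T) t := by
  have h0 : (0 : ℝ) ∈ Icc 0 T := left_mem_Icc.2 (ht.1.trans ht.2)
  refine hasDerivWithinAt_intervalIntegral_of_continuousOn
    (e := fun s x => ut s x ^ 2 + ux s x ^ 2 + θ s x ^ 2)
    (g := fun s x => 2 * ut s x * utt s x + 2 * ux s x * utx s x + 2 * θ s x * θt s x)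
    hab.le (fun s hs x hx => ?_)
    (ContinuousOn.intervalIntegrable_of_Icc hab.le ?_) ?_ ht
  · have hux_t := hasDerivWithinAt_mixed_partial hab h.hasDerivWithinAt_u_t h.hasDerivWithinAt_u_x
      h.hasDerivWithinAt_ut_x h.continuousOn_ut h.continuousOn_utx hs hx
    exact ((((h.hasDerivWithinAt_ut_t s hs x hx).fun_pow 2).fun_add (hux_t.fun_pow 2)).fun_add
      ((h.hasDerivWithinAt_θ_t s hs x hx).fun_pow 2)).congr_deriv (by norm_num)
  · have := h.continuousOn_ut.uncurry_left 0 h0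
    have := h.continuousOn_ux.uncurry_left 0 h0
    have := h.continuousOn_θ.uncurry_left 0 h0
    fun_prop
  · exact (((continuousOn_const.mul h.continuousOn_ut).mul h.continuousOn_utt).add
      ((continuousOn_const.mul h.continuousOn_ux).mul h.continuousOn_utx)).add
      ((continuousOn_const.mul h.continuousOn_θ).mul h.continuousOn_θt)

theorem IsThermoRegular.thermoEnergy_eq_zero (hab : a < b) (hT : 0 < T)
    (h : IsThermoRegular a b T u ut utt ux uxx utx θ θt θx θxx) {p q qx : ℝ → ℝ → ℝ}
    (hq : ∀ t ∈ Icc 0 T, ∀ x ∈ Icc a b, HasDerivWithinAt (q t) (qx t x) (Icc a b) x)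
    (hp_cont : ContinuousOn (uncurry p) (Icc 0 T ×ˢ Icc a b))
    (hq_cont : ContinuousOn (uncurry q) (Icc 0 T ×ˢ Icc a b))
    (hqx_cont : ContinuousOn (uncurry qx) (Icc 0 T ×ˢ Icc a b))
    (hu : ∀ t ∈ Icc 0 T, ∀ x ∈ Icc a b, utt t x = uxx t x + μ * θx t x)
    (hθ : ∀ t ∈ Icc 0 T, ∀ x ∈ Icc a b,
      θt t x = θxx t x + μ * (p t x * θ t x + q t x * utx t x))
    (hbc : ∀ t ∈ Icc 0 T, u t a = 0 ∧ u t b = 0 ∧ θx t a = 0 ∧ θx t b = 0)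
    (hu₀ : ∀ x ∈ Icc a b, u 0 x = 0) (hut₀ : ∀ x ∈ Icc a b, ut 0 x = 0)
    (hθ₀ : ∀ x ∈ Icc a b, θ 0 x = 0) :
    ∀ t ∈ Icc 0 T, thermoEnergy a b ut ux θ t = 0 := by
  obtain ⟨M, hM⟩ := (isCompact_Icc.prod isCompact_Icc).exists_bound_of_continuousOn
    (hp_cont.prodMk (hq_cont.prodMk hqx_cont))
  have hbound : ∀ t ∈ Icc 0 T, ∀ x ∈ Icc a b, |p t x| ≤ M ∧ |q t x| ≤ M ∧ |qx t x| ≤ M := by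
    intro t ht x hx
    simpa only [Prod.norm_def, Real.norm_eq_abs, max_le_iff, uncurry_apply_pair]
      using hM (t, x) ⟨ht, hx⟩
  have h0 : (0 : ℝ) ∈ Icc 0 T := left_mem_Icc.2 hT.le
  have hut_bdry : ∀ t ∈ Icc 0 T, ut t a = 0 ∧ ut t b = 0 := fun t ht =>
    ⟨eq_zero_of_hasDerivWithinAt_of_forall_eq_zero hT (fun s hs => (hbc s hs).1) ht
      (h.hasDerivWithinAt_u_t t ht a (left_mem_Icc.2 hab.le)),
    eq_zero_of_hasDerivWithinAt_of_forall_eq_zero hT (fun s hs => (hbc s hs).2.1) ht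
      (h.hasDerivWithinAt_u_t t ht b (right_mem_Icc.2 hab.le))⟩
  have hux₀ : ∀ x ∈ Icc a b, ux 0 x = 0 := fun x hx =>
    eq_zero_of_hasDerivWithinAt_of_forall_eq_zero hab hu₀ hx (h.hasDerivWithinAt_u_x 0 h0 x hx)
  have hE₀ : thermoEnergy a b ut ux θ 0 = 0 := by
    rw [thermoEnergy, integral_congr_Icc (right_mem_Icc.2 hab.le) (g := fun _ => 0)
      fun x hx => by simp [hut₀ x hx, hux₀ x hx, hθ₀ x hx], intervalIntegral.integral_zero]
  have hrate : ∀ t ∈ Icc 0 T,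
      ∫ x in a..b, (2 * ut t x * utt t x + 2 * ux t x * utx t x + 2 * θ t x * θt t x)
        ≤ (μ ^ 2 * (1 + M ^ 2) + 3 * |μ| * M) * thermoEnergy a b ut ux θ t := by
    intro t ht
    refine (integral_congr_Icc (right_mem_Icc.2 hab.le) fun x hx => ?_).trans_le
      (integral_energy_rate_le hab.le (h.hasDerivWithinAt_ut_x t ht) (h.hasDerivWithinAt_ux_x t ht)
        (h.hasDerivWithinAt_θ_x t ht) (h.hasDerivWithinAt_θx_x t ht) (hq t ht)
        (h.continuousOn_utx.uncurry_left t ht) (h.continuousOn_uxx.uncurry_left t ht)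
        (h.continuousOn_θxx.uncurry_left t ht) (hp_cont.uncurry_left t ht)
        (hqx_cont.uncurry_left t ht) (hbound t ht) (hut_bdry t ht).1 (hut_bdry t ht).2
        (hbc t ht).2.2.1 (hbc t ht).2.2.2)
    rw [hu t ht x hx, hθ t ht x hx]
  intro t ht
  exact le_antisymm (le_zero_of_hasDerivWithinAt_le_mul
    (fun s hs => h.hasDerivWithinAt_thermoEnergy hab hs) hrate hE₀.le t ht)
    (integral_nonneg hab.le fun x _ => by positivity)

theorem IsThermoRegular.eq_zero_of_linearized (hab : a < b) (hT : 0 < T)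
    (h : IsThermoRegular a b T u ut utt ux uxx utx θ θt θx θxx) {p q qx : ℝ → ℝ → ℝ}
    (hq : ∀ t ∈ Icc 0 T, ∀ x ∈ Icc a b, HasDerivWithinAt (q t) (qx t x) (Icc a b) x)
    (hp_cont : ContinuousOn (uncurry p) (Icc 0 T ×ˢ Icc a b))
    (hq_cont : ContinuousOn (uncurry q) (Icc 0 T ×ˢ Icc a b))
    (hqx_cont : ContinuousOn (uncurry qx) (Icc 0 T ×ˢ Icc a b))
    (hu : ∀ t ∈ Ioo 0 T, ∀ x ∈ Ioo a b, utt t x - uxx t x = μ * θx t x)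
    (hθ : ∀ t ∈ Ioo 0 T, ∀ x ∈ Ioo a b,
      θt t x - θxx t x = μ * (p t x * θ t x + q t x * utx t x))
    (hbc : ∀ t ∈ Icc 0 T, u t a = 0 ∧ u t b = 0 ∧ θx t a = 0 ∧ θx t b = 0)
    (hu₀ : ∀ x ∈ Icc a b, u 0 x = 0) (hut₀ : ∀ x ∈ Icc a b, ut 0 x = 0)
    (hθ₀ : ∀ x ∈ Icc a b, θ 0 x = 0) :
    ∀ t ∈ Icc 0 T, ∀ x ∈ Icc a b, u t x = 0 ∧ θ t x = 0 := by
  have hu' := forall_Icc_prod_of_forall_Ioo_prod hT hab (f := fun t x => utt t x - uxx t x)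
    (g := fun t x => μ * θx t x)
    (h.continuousOn_utt.sub h.continuousOn_uxx) (continuousOn_const.mul h.continuousOn_θx) hu
  have hθ' := forall_Icc_prod_of_forall_Ioo_prod hT hab (f := fun t x => θt t x - θxx t x)
    (g := fun t x => μ * (p t x * θ t x + q t x * utx t x))
    (h.continuousOn_θt.sub h.continuousOn_θxx)
    (continuousOn_const.mul ((hp_cont.mul h.continuousOn_θ).add (hq_cont.mul h.continuousOn_utx)))
    hθ
  have hE := h.thermoEnergy_eq_zero hab hT hq hp_cont hq_cont hqx_cont
    (fun t ht x hx => sub_eq_iff_eq_add'.1 (hu' t ht x hx))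
    (fun t ht x hx => sub_eq_iff_eq_add'.1 (hθ' t ht x hx))
    hbc hu₀ hut₀ hθ₀
  have hvanish : ∀ t ∈ Icc 0 T, ∀ x ∈ Icc a b, ut t x = 0 ∧ θ t x = 0 := by
    intro t ht x hx
    have hdensity := eq_zero_of_intervalIntegral_eq_zero_of_nonneg hab
      (f := fun y => ut t y ^ 2 + ux t y ^ 2 + θ t y ^ 2)
      (((h.continuousOn_ut.uncurry_left t ht).pow 2).add
        ((h.continuousOn_ux.uncurry_left t ht).pow 2) |>.add
        ((h.continuousOn_θ.uncurry_left t ht).pow 2))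
      (fun y _ => by positivity) (hE t ht) x hx
    constructor <;> refine pow_eq_zero_iff two_ne_zero |>.1 ?_ <;>
      linarith [sq_nonneg (ut t x), sq_nonneg (ux t x), sq_nonneg (θ t x)]
  intro t ht x hx
  refine ⟨?_, (hvanish t ht x hx).2⟩
  have hFTC := integral_eq_sub_of_hasDerivWithinAt_Icc
    (fun s hs => h.hasDerivWithinAt_u_t s hs x hx) (h.continuousOn_ut.uncurry_right x hx) ht
  rw [integral_congr_Icc ht (g := fun _ => 0) fun s hs => (hvanish s hs x hx).1,
    intervalIntegral.integral_zero, hu₀ x hx] at hFTC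
  linarith

end Thermoelasticity

theorem stmt_16 (a b T μ : ℝ) (hab : a < b) (hT : 0 < T)
    (u₁ u₁t u₁tt u₁x u₁xx u₁tx θ₁ θ₁t θ₁x θ₁xx : ℝ → ℝ → ℝ)
    (u₂ u₂t u₂tt u₂x u₂xx u₂tx θ₂ θ₂t θ₂x θ₂xx : ℝ → ℝ → ℝ)
    (hsol₁ : IsThermoSolution a b T μ u₁ u₁t u₁tt u₁x u₁xx u₁tx θ₁ θ₁t θ₁x θ₁xx)
    (hsol₂ : IsThermoSolution a b T μ u₂ u₂t u₂tt u₂x u₂xx u₂tx θ₂ θ₂t θ₂x θ₂xx)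
    (hui : ∀ x ∈ Icc a b, u₁ 0 x = u₂ 0 x)
    (hvi : ∀ x ∈ Icc a b, u₁t 0 x = u₂t 0 x)
    (hθi : ∀ x ∈ Icc a b, θ₁ 0 x = θ₂ 0 x) :
    ∀ t ∈ Icc 0 T, ∀ x ∈ Icc a b, u₁ t x = u₂ t x ∧ θ₁ t x = θ₂ t x := by
  have h₁ := hsol₁.isThermoRegular
  have h₂ := hsol₂.isThermoRegular
  obtain ⟨-, -, -, -, -, -, -, -, -, hu₁, hθ₁, hbc₁⟩ := hsol₁
  obtain ⟨-, -, -, -, -, -, -, -, -, hu₂, hθ₂, hbc₂⟩ := hsol₂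
  -- `θ₁ u₁tx - θ₂ u₂tx = (θ₁ - θ₂) u₁tx + θ₂ (u₁tx - u₂tx)`
  have hdiff := (h₁.sub h₂).eq_zero_of_linearized (p := u₁tx) (q := θ₂) hab hT
    h₂.hasDerivWithinAt_θ_x h₁.continuousOn_utx h₂.continuousOn_θ h₂.continuousOn_θx
    (fun t ht x hx => by
      simp only [Pi.sub_apply]; linear_combination hu₁ t ht x hx - hu₂ t ht x hx)
    (fun t ht x hx => by
      simp only [Pi.sub_apply]; linear_combination hθ₁ t ht x hx - hθ₂ t ht x hx)
    (fun t ht => by simp [hbc₁ t ht, hbc₂ t ht])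
    (fun x hx => sub_eq_zero.2 (hui x hx)) (fun x hx => sub_eq_zero.2 (hvi x hx))
    (fun x hx => sub_eq_zero.2 (hθi x hx))
  intro t ht x hx
  obtain ⟨hu, hθ⟩ := hdiff t ht x hx
  exact ⟨sub_eq_zero.1 hu, sub_eq_zero.1 hθ⟩
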